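/- Let g : ZMod N → ℂ satisfy ⟨g, Π_λ g⟩ ≠ 0 for all λ ∈ (ZMod N)². Then the N² rank-one matrices (g_λ g_λᴴ)_{λ ∈ (ZMod N)²} form a frame for the space of N×N complex matrices with the Hilbert–Schmidt inner product, with frame bounds A = N·min_{λ} |⟨g, Π_λ g⟩|² and B = N·max_{λ} |⟨g, Π_λ g⟩|²; that is, for every N×N complex matrix H, A·‖H‖²_HS ≤ ∑_{λ ∈ (ZMod N)²} |⟨g_λ, H g_λ⟩|² ≤ B·‖H‖²_HS. -/

import Mathlib

/-!
Writing `N • H = ∑ₐ cₐ Πₐ` with the spreading coefficients `cₐ` of `H` (the discrete Fourier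
coefficients of its diagonals) and using the commutation rule
`⟨g_λ, Πₐ g_λ⟩ = ω^[a,λ] ⟨g, Πₐ g⟩`, where `[a,λ]` is the symplectic form on `(ZMod N)²`, shows that
`λ ↦ N ⟨g_λ, H g_λ⟩` is the symplectic Fourier transform of `a ↦ cₐ ⟨g, Πₐ g⟩`. Parseval on
`(ZMod N)²` gives `∑_λ |⟨g_λ, H g_λ⟩|² = ∑ₐ |cₐ|² |⟨g, Πₐ g⟩|²`, and Parseval on `ZMod N` gives
`∑ₐ |cₐ|² = N ‖H‖²_HS`; bounding `|⟨g, Πₐ g⟩|²` by its minimum and maximum gives the frame bounds.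
-/

open Complex Finset

/-- `gw N m = ω^m` where `ω = exp(2πi/N)` and `m : ZMod N`. -/
noncomputable def gw (N : ℕ) (m : ZMod N) : ℂ :=
  Complex.exp (2 * Real.pi * Complex.I * (m.val : ℂ) / (N : ℂ))

/-- Translation operator `(T_p x)(n) = x(n-p)`. -/
def Tr (N : ℕ) (p : ZMod N) (x : ZMod N → ℂ) : ZMod N → ℂ :=
  fun n => x (n - p)

/-- Modulation operator `(M_ℓ x)(n) = ω^{ℓ·n} x(n)`. -/
noncomputable def Md (N : ℕ) (l : ZMod N) (x : ZMod N → ℂ) : ZMod N → ℂ :=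
  fun n => gw N (l * n) * x n

/-- Time-frequency shift `Π_{(p,ℓ)} = M_ℓ ∘ T_p`. -/
noncomputable def Pig (N : ℕ) (p l : ZMod N) (x : ZMod N → ℂ) : ZMod N → ℂ :=
  Md N l (Tr N p x)

/-- Inner product, conjugate linear in the first argument. -/
noncomputable def inn (N : ℕ) [NeZero N] (x y : ZMod N → ℂ) : ℂ :=
  ∑ j : ZMod N, (starRingEnd ℂ) (x j) * y j

open scoped Matrix

namespace Matrix

theorem star_dotProduct_self_eq_sum_norm_sq {𝕜 ι : Type*} [RCLike 𝕜] [Fintype ι]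
    (v : ι → 𝕜) : star v ⬝ᵥ v = ((∑ a, ‖v a‖ ^ 2 : ℝ) : 𝕜) := by
  simp [dotProduct, RCLike.conj_mul]

theorem sum_norm_sq_mulVec_of_conjTranspose_mul_self {𝕜 ι κ : Type*} [RCLike 𝕜]
    [Fintype ι] [Fintype κ] [DecidableEq ι] (K : Matrix κ ι 𝕜) (c : ℝ)
    (hK : Kᴴ * K = (c : 𝕜) • 1) (d : ι → 𝕜) :
    ∑ x, ‖(K *ᵥ d) x‖ ^ 2 = c * ∑ a, ‖d a‖ ^ 2 := by
  apply RCLike.ofReal_injective (K := 𝕜)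
  rw [← star_dotProduct_self_eq_sum_norm_sq, RCLike.ofReal_mul,
    ← star_dotProduct_self_eq_sum_norm_sq, star_mulVec, ← dotProduct_mulVec,
    mulVec_mulVec, hK, smul_mulVec, one_mulVec, dotProduct_smul, smul_eq_mul]

end Matrix

section Character

variable {N : ℕ} [NeZero N]

theorem gw_eq_stdAddChar (m : ZMod N) : gw N m = ZMod.stdAddChar m := by
  rw [ZMod.stdAddChar_apply, ZMod.toCircle_apply, gw]

theorem gw_add (a b : ZMod N) : gw N (a + b) = gw N a * gw N b := by
  simp only [gw_eq_stdAddChar, AddChar.map_add_eq_mul]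

theorem conj_gw_mul_gw (a b : ZMod N) : starRingEnd ℂ (gw N a) * gw N b = gw N (b - a) := by
  simp only [gw_eq_stdAddChar, ← AddChar.map_neg_eq_conj, ← AddChar.map_add_eq_mul,
    neg_add_eq_sub]

theorem sum_gw_mul (t : ZMod N) :
    ∑ i, gw N (t * i) = if t = 0 then (N : ℂ) else 0 := by
  simp only [gw_eq_stdAddChar]
  split_ifs with ht
  · simp [ht]
  · exact AddChar.sum_eq_zero_of_ne_one (ZMod.isPrimitive_stdAddChar N ht)

end Character

section SpreadingRepresentation

variable {N : ℕ} [NeZero N]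

theorem inn_eq_star_dotProduct (x y : ZMod N → ℂ) : inn N x y = star x ⬝ᵥ y := rfl

noncomputable def spreadingCoeff (H : Matrix (ZMod N) (ZMod N) ℂ) (a : ZMod N × ZMod N) : ℂ :=
  ∑ n, gw N (-(a.2 * n)) * H n (n - a.1)

theorem natCast_smul_mulVec_eq_sum_spreadingCoeff_smul_Pig (H : Matrix (ZMod N) (ZMod N) ℂ)
    (x : ZMod N → ℂ) : (N : ℂ) • H *ᵥ x = ∑ a, spreadingCoeff H a • Pig N a.1 a.2 x := by
  ext i
  have phase (m n : ZMod N) : gw N (-(m * n)) * gw N (m * i) = gw N ((i - n) * m) := by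
    rw [← gw_add]; ring_nf
  calc ((N : ℂ) • H *ᵥ x) i = ∑ q, (N : ℂ) * H i (i - q) * x (i - q) := by
        simp only [Pi.smul_apply, Matrix.mulVec, dotProduct, smul_eq_mul, Finset.mul_sum]
        exact Fintype.sum_equiv (Equiv.subLeft i) _ _ fun j => by simp [mul_assoc]
    _ = ∑ q, ∑ n, (∑ m, gw N ((i - n) * m)) * H n (n - q) * x (i - q) := by
        simp only [sum_gw_mul, sub_eq_zero, ite_mul, zero_mul, Finset.sum_ite_eq, Finset.mem_univ,
          if_true]
    _ = ∑ a : ZMod N × ZMod N, spreadingCoeff H a * Pig N a.1 a.2 x i := by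
        rw [Fintype.sum_prod_type]
        refine Finset.sum_congr rfl fun q _ => ?_
        simp only [spreadingCoeff, Pig, Md, Tr, Finset.sum_mul]
        rw [Finset.sum_comm]
        refine Finset.sum_congr rfl fun m _ => Finset.sum_congr rfl fun n _ => ?_
        rw [← phase]
        ring
    _ = (∑ a, spreadingCoeff H a • Pig N a.1 a.2 x) i := by simp

theorem inn_Pig_Pig_Pig (g : ZMod N → ℂ) (p l q m : ZMod N) :
    inn N (Pig N p l g) (Pig N q m (Pig N p l g)) =
      gw N (m * p - l * q) * inn N g (Pig N q m g) := by
  rw [inn, inn, Finset.mul_sum]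
  refine Fintype.sum_equiv (Equiv.subRight p) _ _ fun i => ?_
  simp only [Pig, Md, Tr, Equiv.subRight_apply, map_mul]
  have phase : starRingEnd ℂ (gw N (l * i)) * (gw N (m * i) * gw N (l * (i - q))) =
      gw N (m * p - l * q) * gw N (m * (i - p)) := by
    rw [← gw_add, conj_gw_mul_gw, ← gw_add]; ring_nf
  rw [sub_right_comm i q p]
  linear_combination (starRingEnd ℂ (g (i - p)) * g (i - p - q)) * phase

end SpreadingRepresentation

section FrameIdentity

variable {N : ℕ} [NeZero N]

theorem natCast_mul_inn_Pig_mulVec_Pig (g : ZMod N → ℂ) (H : Matrix (ZMod N) (ZMod N) ℂ)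
    (p l : ZMod N) :
    (N : ℂ) * inn N (Pig N p l g) (H *ᵥ Pig N p l g) =
      ∑ a, gw N (a.2 * p - l * a.1) * (spreadingCoeff H a * inn N g (Pig N a.1 a.2 g)) := by
  rw [inn_eq_star_dotProduct, ← smul_eq_mul, ← dotProduct_smul,
    natCast_smul_mulVec_eq_sum_spreadingCoeff_smul_Pig, dotProduct_sum]
  refine Finset.sum_congr rfl fun a _ => ?_
  rw [dotProduct_smul, ← inn_eq_star_dotProduct, inn_Pig_Pig_Pig, smul_eq_mul]
  ring

theorem sum_norm_sq_spreadingCoeff (H : Matrix (ZMod N) (ZMod N) ℂ) :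
    ∑ a, ‖spreadingCoeff H a‖ ^ 2 = N * ∑ i, ∑ j, ‖H i j‖ ^ 2 := by
  set K : Matrix (ZMod N) (ZMod N) ℂ := Matrix.of fun m n => gw N (-(m * n))
  have hK : Kᴴ * K = ((N : ℝ) : ℂ) • 1 := by
    ext a b
    have phase (m : ZMod N) : starRingEnd ℂ (gw N (-(m * a))) * gw N (-(m * b)) =
        gw N ((a - b) * m) := by
      rw [conj_gw_mul_gw]; ring_nf
    simp [K, Matrix.mul_apply, Matrix.one_apply, phase, sum_gw_mul, sub_eq_zero]
  calc ∑ a, ‖spreadingCoeff H a‖ ^ 2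
      = ∑ q, (N : ℝ) * ∑ n, ‖H n (n - q)‖ ^ 2 := by
        rw [Fintype.sum_prod_type]
        exact Finset.sum_congr rfl fun q _ =>
          Matrix.sum_norm_sq_mulVec_of_conjTranspose_mul_self K N hK fun n => H n (n - q)
    _ = N * ∑ i, ∑ j, ‖H i j‖ ^ 2 := by
        rw [← Finset.mul_sum, Finset.sum_comm]
        congr 1
        exact Finset.sum_congr rfl fun i _ =>
          Fintype.sum_equiv (Equiv.subLeft i) _ _ fun q => by simp

noncomputable def symplecticKernel (N : ℕ) : Matrix (ZMod N × ZMod N) (ZMod N × ZMod N) ℂ :=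
  Matrix.of fun x a => gw N (a.2 * x.1 - x.2 * a.1)

theorem conjTranspose_mul_self_symplecticKernel :
    (symplecticKernel N)ᴴ * symplecticKernel N = ((N ^ 2 : ℝ) : ℂ) • 1 := by
  ext a b
  have phase (x : ZMod N × ZMod N) :
      starRingEnd ℂ (gw N (a.2 * x.1 - x.2 * a.1)) * gw N (b.2 * x.1 - x.2 * b.1) =
        gw N ((b.2 - a.2) * x.1) * gw N ((a.1 - b.1) * x.2) := by
    rw [conj_gw_mul_gw, ← gw_add]; ring_nf
  simp only [Matrix.mul_apply, Matrix.conjTranspose_apply, symplecticKernel, Matrix.of_apply,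
    RCLike.star_def, phase, Fintype.sum_prod_type, ← Finset.mul_sum, ← Finset.sum_mul,
    sum_gw_mul]
  by_cases h1 : a.1 = b.1 <;> by_cases h2 : a.2 = b.2 <;>
    simp [Matrix.one_apply, Prod.ext_iff, h1, h2, sub_eq_zero, eq_comm, sq]

theorem sum_norm_sq_inn_Pig_mulVec_Pig (g : ZMod N → ℂ) (H : Matrix (ZMod N) (ZMod N) ℂ) :
    ∑ μ : ZMod N × ZMod N, ‖inn N (Pig N μ.1 μ.2 g) (H *ᵥ Pig N μ.1 μ.2 g)‖ ^ 2 =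
      ∑ a, ‖spreadingCoeff H a‖ ^ 2 * ‖inn N g (Pig N a.1 a.2 g)‖ ^ 2 := by
  have parseval := Matrix.sum_norm_sq_mulVec_of_conjTranspose_mul_self _ _
    conjTranspose_mul_self_symplecticKernel fun a => spreadingCoeff H a * inn N g (Pig N a.1 a.2 g)
  simp only [Matrix.mulVec, dotProduct, symplecticKernel, Matrix.of_apply,
    ← natCast_mul_inn_Pig_mulVec_Pig, norm_mul, mul_pow, Complex.norm_natCast,
    ← Finset.mul_sum] at parseval
  exact mul_left_cancel₀ (pow_pos (Nat.cast_pos.2 (NeZero.pos N)) 2).ne' parseval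

end FrameIdentity

theorem Gabor_rank_one_frame_general (N : ℕ) [NeZero N] (g : ZMod N → ℂ)
    (H : Matrix (ZMod N) (ZMod N) ℂ) :
    (N : ℝ) *
        (Finset.univ.inf' Finset.univ_nonempty
          (fun μ : ZMod N × ZMod N => ‖inn N g (Pig N μ.1 μ.2 g)‖ ^ 2)) *
        (∑ i : ZMod N, ∑ j : ZMod N, ‖H i j‖ ^ 2) ≤
      (∑ μ : ZMod N × ZMod N,
        ‖inn N (Pig N μ.1 μ.2 g) (H.mulVec (Pig N μ.1 μ.2 g))‖ ^ 2) ∧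
    (∑ μ : ZMod N × ZMod N,
        ‖inn N (Pig N μ.1 μ.2 g) (H.mulVec (Pig N μ.1 μ.2 g))‖ ^ 2) ≤
      (N : ℝ) *
        (Finset.univ.sup' Finset.univ_nonempty
          (fun μ : ZMod N × ZMod N => ‖inn N g (Pig N μ.1 μ.2 g)‖ ^ 2)) *
        (∑ i : ZMod N, ∑ j : ZMod N, ‖H i j‖ ^ 2) := by
  rw [sum_norm_sq_inn_Pig_mulVec_Pig, mul_right_comm, ← sum_norm_sq_spreadingCoeff,
    mul_right_comm, ← sum_norm_sq_spreadingCoeff, Finset.sum_mul, Finset.sum_mul]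
  constructor
  · exact Finset.sum_le_sum fun a _ =>
      mul_le_mul_of_nonneg_left (Finset.inf'_le (fun μ : ZMod N × ZMod N =>
        ‖inn N g (Pig N μ.1 μ.2 g)‖ ^ 2) (Finset.mem_univ a)) (sq_nonneg _)
  · exact Finset.sum_le_sum fun a _ =>
      mul_le_mul_of_nonneg_left (Finset.le_sup' (fun μ : ZMod N × ZMod N =>
        ‖inn N g (Pig N μ.1 μ.2 g)‖ ^ 2) (Finset.mem_univ a)) (sq_nonneg _)

/-- The rank-one operators `g_λ g_λᴴ` form a frame for the matrix space with
frame bounds `A = N min_λ |⟨g,g_λ⟩|²` and `B = N max_λ |⟨g,g_λ⟩|²`. -/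
theorem Gabor_rank_one_frame (N : ℕ) [NeZero N] (g : ZMod N → ℂ)
    (hg : ∀ p l : ZMod N, inn N g (Pig N p l g) ≠ 0)
    (H : Matrix (ZMod N) (ZMod N) ℂ) :
    (N : ℝ) *
        (Finset.univ.inf' Finset.univ_nonempty
          (fun μ : ZMod N × ZMod N => ‖inn N g (Pig N μ.1 μ.2 g)‖ ^ 2)) *
        (∑ i : ZMod N, ∑ j : ZMod N, ‖H i j‖ ^ 2) ≤
      (∑ μ : ZMod N × ZMod N,
        ‖inn N (Pig N μ.1 μ.2 g) (H.mulVec (Pig N μ.1 μ.2 g))‖ ^ 2) ∧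
    (∑ μ : ZMod N × ZMod N,
        ‖inn N (Pig N μ.1 μ.2 g) (H.mulVec (Pig N μ.1 μ.2 g))‖ ^ 2) ≤
      (N : ℝ) *
        (Finset.univ.sup' Finset.univ_nonempty
          (fun μ : ZMod N × ZMod N => ‖inn N g (Pig N μ.1 μ.2 g)‖ ^ 2)) *
        (∑ i : ZMod N, ∑ j : ZMod N, ‖H i j‖ ^ 2) :=
  Gabor_rank_one_frame_general N g H
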